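/- Sign of the stress-energy defect s(λ): for every real λ > 1, one has λ⁴ − 4λ² log λ − 1 > 0; consequently s(λ) = −(8π/(λ²−1)²)(λ⁴ − 4λ² log λ − 1) < 0 for all λ > 1. -/
import Mathlib


open Real

lemma log_lt_half_sub_inv {t : ℝ} (ht : 1 < t) : Real.log t < (t - t⁻¹) / 2 := by
  have key : StrictMonoOn (fun x : ℝ => (x - x⁻¹) / 2 - Real.log x) (Set.Ici 1) := by
    apply strictMonoOn_of_deriv_pos (convex_Ici 1)
    · apply ContinuousOn.sub
      · exact (continuousOn_id.sub (continuousOn_inv₀.mono (fun x hx => by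
          simp only [Set.mem_Ici] at hx; simp only [Set.mem_compl_iff, Set.mem_singleton_iff]
          intro h; simp [h] at hx; linarith))).div_const 2
      · exact Real.continuousOn_log.mono (fun x hx => by
          simp only [Set.mem_Ici] at hx; simp only [Set.mem_compl_iff, Set.mem_singleton_iff]
          intro h; simp [h] at hx; linarith)
    · intro x hx
      rw [interior_Ici] at hx
      have hx1 : (1:ℝ) < x := hx
      have hx0 : x ≠ 0 := by positivity
      have hd : HasDerivAt (fun x : ℝ => (x - x⁻¹) / 2 - Real.log x)
          ((1 - (-(x^2)⁻¹)) / 2 - x⁻¹) x := by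
        exact (((hasDerivAt_id x).sub (hasDerivAt_inv hx0)).div_const 2).sub
          (Real.hasDerivAt_log hx0)
      rw [hd.deriv]
      have hx2 : (0:ℝ) < x ^ 2 := by positivity
      have hsq : (x^2)⁻¹ = x⁻¹ * x⁻¹ := by rw [sq, mul_inv]
      have hlt : x⁻¹ < 1 := inv_lt_one_of_one_lt₀ hx1
      nlinarith [sq_nonneg (1 - x⁻¹), sq_nonneg x⁻¹]
  have h := key (Set.self_mem_Ici) (Set.mem_Ici.mpr ht.le) ht
  simp at h
  linarith

/-- **Sign of the stress-energy defect `s(λ)`**: for every real `λ > 1` one has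
`λ⁴ − 4λ² log λ − 1 > 0`, and consequently
`s(λ) = −(8π/(λ²−1)²)(λ⁴ − 4λ² log λ − 1) < 0`. -/
theorem sign_of_stress_energy_defect (l : ℝ) (hl : 1 < l) :
    0 < l ^ 4 - 4 * l ^ 2 * Real.log l - 1 ∧
      -(8 * π / (l ^ 2 - 1) ^ 2) * (l ^ 4 - 4 * l ^ 2 * Real.log l - 1) < 0 := by
  have hl0 : (0:ℝ) < l := by linarith
  have ht : 1 < l ^ 2 := by nlinarith
  have h := log_lt_half_sub_inv ht
  rw [Real.log_pow] at h
  have hinv : (l ^ 2)⁻¹ * l ^ 2 = 1 := inv_mul_cancel₀ (by positivity)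
  have h1 : 0 < l ^ 4 - 4 * l ^ 2 * Real.log l - 1 := by nlinarith
  refine ⟨h1, ?_⟩
  have hpos : 0 < 8 * π / (l ^ 2 - 1) ^ 2 := by
    apply div_pos (by positivity)
    have : l ^ 2 - 1 > 0 := by linarith
    positivity
  nlinarith [mul_pos hpos h1]
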